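/- arXiv:2512.14131 — 2 statements merged into one kernel-verified Lean document; each statement's English description precedes it below -/
import Mathlib

section
/- Let g : [0,1] → ℝ satisfy the lower Lipschitz bound |g(u) − g(u')| ≥ c₃·|u − u'| for all u, u' ∈ [0,1], with c₃ > 0, and the positivity bound g(u) ≥ c₄ > 0. Fix u₂, u₃ ∈ [0,1] and constants m₀, m₁, m₂ ≥ 0 and δ > 0. Then the set of u₁ ∈ [0,1] satisfying 6m₀ ≤ 2g(u₁)g(u₂)g(u₃) − 2(g(u₂)+g(u₃))m₁ − 2g(u₂)g(u₃)m₂ ≤ 6(m₀ + δ) is contained in an interval of length at most 3δ/(c₃·c₄²). -/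
/-- Under a lower Lipschitz bound and strict positivity of g, the u₁-section of
the active-boundary set for the μ₀ perturbation lies in an interval of length at
most 3δ/(c₃·c₄²). -/
theorem mu0_active_set_small (g : ℝ → ℝ) (c₃ c₄ : ℝ) (hc₃ : 0 < c₃) (hc₄ : 0 < c₄)
    (hlip : ∀ u ∈ Set.Icc (0:ℝ) 1, ∀ u' ∈ Set.Icc (0:ℝ) 1,
      c₃ * |u - u'| ≤ |g u - g u'|)
    (hpos : ∀ u ∈ Set.Icc (0:ℝ) 1, c₄ ≤ g u)
    (u₂ u₃ : ℝ) (hu₂ : u₂ ∈ Set.Icc (0:ℝ) 1) (hu₃ : u₃ ∈ Set.Icc (0:ℝ) 1)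
    (m₀ m₁ m₂ δ : ℝ) (hm₀ : 0 ≤ m₀) (hm₁ : 0 ≤ m₁) (hm₂ : 0 ≤ m₂) (hδ : 0 < δ) :
    ∃ a b : ℝ, b - a ≤ 3 * δ / (c₃ * c₄ ^ 2) ∧
      {u₁ ∈ Set.Icc (0:ℝ) 1 |
        6 * m₀ ≤ 2 * g u₁ * g u₂ * g u₃ - 2 * (g u₂ + g u₃) * m₁
                    - 2 * g u₂ * g u₃ * m₂ ∧
        2 * g u₁ * g u₂ * g u₃ - 2 * (g u₂ + g u₃) * m₁
                    - 2 * g u₂ * g u₃ * m₂ ≤ 6 * (m₀ + δ)} ⊆ Set.Icc a b := by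
  classical
  set L : ℝ := 3 * δ / (c₃ * c₄ ^ 2) with hLdef
  have hLnn : 0 ≤ L := by positivity
  set S : Set ℝ := {u₁ ∈ Set.Icc (0:ℝ) 1 |
        6 * m₀ ≤ 2 * g u₁ * g u₂ * g u₃ - 2 * (g u₂ + g u₃) * m₁
                    - 2 * g u₂ * g u₃ * m₂ ∧
        2 * g u₁ * g u₂ * g u₃ - 2 * (g u₂ + g u₃) * m₁
                    - 2 * g u₂ * g u₃ * m₂ ≤ 6 * (m₀ + δ)} with hSdef
  have h₂ : c₄ ≤ g u₂ := hpos u₂ hu₂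
  have h₃ : c₄ ≤ g u₃ := hpos u₃ hu₃
  have key : ∀ u ∈ S, ∀ u' ∈ S, u - u' ≤ L := by
    intro u hu u' hu'
    obtain ⟨huI, hul, huu⟩ := hu
    obtain ⟨hu'I, hu'l, hu'u⟩ := hu'
    -- |F u - F u'| ≤ 6δ
    have hF : 2 * (g u - g u') * (g u₂ * g u₃) ≤ 6 * δ := by nlinarith
    have hF' : 2 * (g u' - g u) * (g u₂ * g u₃) ≤ 6 * δ := by nlinarith
    have habs : 2 * |g u - g u'| * (g u₂ * g u₃) ≤ 6 * δ := by
      rcases abs_cases (g u - g u') with ⟨h, _⟩ | ⟨h, _⟩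
      · rw [h]; exact hF
      · rw [h]; linarith [hF']
    have hlip' := hlip u huI u' hu'I
    have hgu : 2 * (c₃ * |u - u'|) * (c₄ * c₄) ≤ 6 * δ := by
      have h1 : 2 * (c₃ * |u - u'|) * (c₄ * c₄) ≤ 2 * |g u - g u'| * (g u₂ * g u₃) := by
        have hnn2 : (0:ℝ) ≤ |g u - g u'| := abs_nonneg _
        have hprod : c₄ * c₄ ≤ g u₂ * g u₃ :=
          mul_le_mul h₂ h₃ hc₄.le (le_trans hc₄.le h₂)
        have hmul := mul_le_mul hlip' hprod (by positivity) hnn2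
        nlinarith [hmul]
      linarith
    have : |u - u'| ≤ L := by
      rw [hLdef, le_div_iff₀ (by positivity : 0 < c₃ * c₄ ^ 2)]
      nlinarith
    calc u - u' ≤ |u - u'| := le_abs_self _
      _ ≤ L := this
  by_cases hne : S.Nonempty
  · obtain ⟨u₀, hu₀⟩ := hne
    have hbdd : BddAbove S := ⟨1, fun x hx => hx.1.2⟩
    have hbdb : BddBelow S := ⟨0, fun x hx => hx.1.1⟩
    refine ⟨sInf S, sSup S, ?_, ?_⟩
    · have h1 : sSup S ≤ sInf S + L := by
        apply csSup_le ⟨u₀, hu₀⟩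
        intro x hx
        have h2 : x - L ≤ sInf S := by
          apply le_csInf ⟨u₀, hu₀⟩
          intro y hy
          have := key x hx y hy
          linarith
        linarith
      linarith
    · intro x hx
      exact ⟨csInf_le hbdb hx, le_csSup hbdd hx⟩
  · refine ⟨0, 0, by simpa using hLnn, ?_⟩
    intro x hx
    exact absurd ⟨x, hx⟩ hne
end

section
/- For K = 3, let R₁, R₂, R₃ ∈ ℝ and define l* as the smallest index l ∈ {1,2,3} maximizing the partial sum S_l = R₁ + ⋯ + R_l, with l* = 0 if max(S₁,S₂,S₃) ≤ 0. Define D_i = 1 if i ≤ l*, else 0. Then D₁ = 1{S₁ > 0 ∨ S₂ > 0 ∨ S₃ > 0}, D₂ = D₁·1{R₂ > 0 ∨ R₂ + R₃ > 0}, and D₃ = D₂·1{R₃ > 0}, and moreover D₁R₁ + D₂R₂ + D₃R₃ = max{0, S₁, S₂, S₃}. -/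
/-!
Unfolding `lstar` shows that each of its four values is pinned down by sign conditions: every
block `R_{j+1} + ⋯ + R_{l*}` ending at `l*` is positive, and every block `R_{l*+1} + ⋯ + R_l`
starting after it is nonpositive. With these in hand, the cascaded indicators and the identity
`S_{l*} = max 0 (max S₁ (max S₂ S₃))` are linear arithmetic in each case.
-/

/-- The smallest index l ∈ {1,2,3} maximizing the prefix sum S_l, with value 0
if max(S₁,S₂,S₃) ≤ 0. -/
noncomputable def lstar (R₁ R₂ R₃ : ℝ) : ℕ :=
  if max R₁ (max (R₁ + R₂) (R₁ + R₂ + R₃)) ≤ 0 then 0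
  else if max (R₁ + R₂) (R₁ + R₂ + R₃) ≤ R₁ then 1
  else if R₁ + R₂ + R₃ ≤ R₁ + R₂ then 2
  else 3

/-- The prefix-of-ones decision vector: D_i = 1 iff i ≤ l*. -/
noncomputable def Dpol (R₁ R₂ R₃ : ℝ) (i : ℕ) : ℝ :=
  if i ≤ lstar R₁ R₂ R₃ then 1 else 0

theorem lstar_cases (R₁ R₂ R₃ : ℝ) :
    (lstar R₁ R₂ R₃ = 0 ∧ R₁ ≤ 0 ∧ R₁ + R₂ ≤ 0 ∧ R₁ + R₂ + R₃ ≤ 0) ∨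
    (lstar R₁ R₂ R₃ = 1 ∧ 0 < R₁ ∧ R₂ ≤ 0 ∧ R₂ + R₃ ≤ 0) ∨
    (lstar R₁ R₂ R₃ = 2 ∧ 0 < R₁ + R₂ ∧ 0 < R₂ ∧ R₃ ≤ 0) ∨
    (lstar R₁ R₂ R₃ = 3 ∧ 0 < R₁ + R₂ + R₃ ∧ 0 < R₂ + R₃ ∧ 0 < R₃) := by
  rcases le_or_gt (max R₁ (max (R₁ + R₂) (R₁ + R₂ + R₃))) 0 with h0 | h0
  · obtain ⟨h1, h2, h3⟩ : R₁ ≤ 0 ∧ R₁ + R₂ ≤ 0 ∧ R₁ + R₂ + R₃ ≤ 0 := by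
      simpa only [max_le_iff] using h0
    exact Or.inl ⟨if_pos h0, h1, h2, h3⟩
  rcases le_or_gt (max (R₁ + R₂) (R₁ + R₂ + R₃)) R₁ with h1 | h1
  · have hl : lstar R₁ R₂ R₃ = 1 := by rw [lstar, if_neg h0.not_ge, if_pos h1]
    have hS₁ : 0 < R₁ := h0.trans_le (max_le le_rfl h1)
    have ⟨h2, h3⟩ := max_le_iff.mp h1
    exact Or.inr <| Or.inl ⟨hl, hS₁, by linarith, by linarith⟩
  rcases le_or_gt (R₁ + R₂ + R₃) (R₁ + R₂) with h2 | h2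
  · have hl : lstar R₁ R₂ R₃ = 2 := by
      rw [lstar, if_neg h0.not_ge, if_neg h1.not_ge, if_pos h2]
    have h12 : R₁ < R₁ + R₂ := h1.trans_le (max_le le_rfl h2)
    have hS₂ : 0 < R₁ + R₂ := h0.trans_le (max_le h12.le (max_le le_rfl h2))
    exact Or.inr <| Or.inr <| Or.inl ⟨hl, hS₂, by linarith, by linarith⟩
  · have hl : lstar R₁ R₂ R₃ = 3 := by
      rw [lstar, if_neg h0.not_ge, if_neg h1.not_ge, if_neg h2.not_ge]
    have h13 : R₁ < R₁ + R₂ + R₃ := h1.trans_le (max_le h2.le le_rfl)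
    have hS₃ : 0 < R₁ + R₂ + R₃ := h0.trans_le (max_le h13.le (max_le h2.le le_rfl))
    exact Or.inr <| Or.inr <| Or.inr ⟨hl, hS₃, by linarith, by linarith⟩

/-- The explicit K=3 optimal prefix policy: cascaded indicator characterization
and the value identity D₁R₁ + D₂R₂ + D₃R₃ = max{0,S₁,S₂,S₃}. -/
theorem optimal_prefix_policy_K3 (R₁ R₂ R₃ : ℝ) :
    (Dpol R₁ R₂ R₃ 1
      = if 0 < R₁ ∨ 0 < R₁ + R₂ ∨ 0 < R₁ + R₂ + R₃ then (1:ℝ) else 0) ∧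
    (Dpol R₁ R₂ R₃ 2
      = Dpol R₁ R₂ R₃ 1 * (if 0 < R₂ ∨ 0 < R₂ + R₃ then (1:ℝ) else 0)) ∧
    (Dpol R₁ R₂ R₃ 3
      = Dpol R₁ R₂ R₃ 2 * (if 0 < R₃ then (1:ℝ) else 0)) ∧
    (Dpol R₁ R₂ R₃ 1 * R₁ + Dpol R₁ R₂ R₃ 2 * R₂ + Dpol R₁ R₂ R₃ 3 * R₃
      = max 0 (max R₁ (max (R₁ + R₂) (R₁ + R₂ + R₃)))) := by
  rcases lstar_cases R₁ R₂ R₃ with h | h | h | h <;> grind [Dpol]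
end
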